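/- arXiv:math/0410232 — 2 statements merged into one kernel-verified Lean document; each statement's English description precedes it below -/
import Mathlib

section
/- Let (g, J, ω) be a Kähler Lie algebra with associated metric g(x,y) = ω(Jx,y) and Levi-Civita connection ∇, and let h be an ω-lagrangian ideal of g with h ∩ J(h) = 0. Then for all x, y ∈ h: ∇_x y ∈ J(h), ∇_{Jx}(Jy) ∈ J(h), ∇_x(Jy) ∈ h, and ∇_{Jx} y ∈ h. In particular the subalgebra J(h) is totally geodesic: ∇_u v ∈ J(h) for all u, v ∈ J(h). -/
section KahlerDefs

variable {L : Type*} [LieRing L] [LieAlgebra ℝ L]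

def IsComplexStructure (J : Module.End ℝ L) : Prop :=
  (∀ x, J (J x) = -x) ∧
  ∀ x y : L, ⁅J x, J y⁆ - ⁅x, y⁆ - J ⁅J x, y⁆ - J ⁅x, J y⁆ = 0

def IsSymplecticForm (ω : L →ₗ[ℝ] L →ₗ[ℝ] ℝ) : Prop :=
  (∀ x, ω x x = 0) ∧
  (∀ x, (∀ y, ω x y = 0) → x = 0) ∧
  ∀ x y z : L, ω ⁅x, y⁆ z + ω ⁅y, z⁆ x + ω ⁅z, x⁆ y = 0

def IsKahlerStructure (J : Module.End ℝ L) (ω : L →ₗ[ℝ] L →ₗ[ℝ] ℝ) : Prop :=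
  IsComplexStructure J ∧ IsSymplecticForm ω ∧ ∀ x y : L, ω (J x) (J y) = ω x y

def IsLeviCivita (J : Module.End ℝ L) (ω : L →ₗ[ℝ] L →ₗ[ℝ] ℝ)
    (D : L →ₗ[ℝ] L →ₗ[ℝ] L) : Prop :=
  ∀ x y z : L,
    2 * ω (J (D x y)) z = ω (J ⁅x, y⁆) z - ω (J ⁅y, z⁆) x + ω (J ⁅z, x⁆) y

noncomputable def ricci (D : L →ₗ[ℝ] L →ₗ[ℝ] L) (x y : L) : ℝ :=
  - LinearMap.trace ℝ L
      ((D x) ∘ₗ (D.flip y) - D.flip (D x y) - (D.flip y) ∘ₗ (LieAlgebra.ad ℝ L x))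

def IsFlat (D : L →ₗ[ℝ] L →ₗ[ℝ] L) : Prop :=
  ∀ x y z : L, D x (D y z) - D y (D x z) - D ⁅x, y⁆ z = 0

end KahlerDefs

section Models

variable (M : Type*) [LieRing M] [LieAlgebra ℝ M]

def IsRxH3 : Prop :=
  ∃ b : Module.Basis (Fin 4) ℝ M,
    ⁅b 0, b 1⁆ = b 2 ∧ ⁅b 0, b 2⁆ = 0 ∧ ⁅b 0, b 3⁆ = 0 ∧
    ⁅b 1, b 2⁆ = 0 ∧ ⁅b 1, b 3⁆ = 0 ∧ ⁅b 2, b 3⁆ = 0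

def IsR2xAffR : Prop :=
  ∃ b : Module.Basis (Fin 4) ℝ M,
    ⁅b 0, b 1⁆ = b 1 ∧ ⁅b 0, b 2⁆ = 0 ∧ ⁅b 0, b 3⁆ = 0 ∧
    ⁅b 1, b 2⁆ = 0 ∧ ⁅b 1, b 3⁆ = 0 ∧ ⁅b 2, b 3⁆ = 0

def IsRxE2 : Prop :=
  ∃ b : Module.Basis (Fin 4) ℝ M,
    ⁅b 0, b 1⁆ = -b 2 ∧ ⁅b 0, b 2⁆ = b 1 ∧ ⁅b 0, b 3⁆ = 0 ∧
    ⁅b 1, b 2⁆ = 0 ∧ ⁅b 1, b 3⁆ = 0 ∧ ⁅b 2, b 3⁆ = 0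

def IsAffRxAffR : Prop :=
  ∃ b : Module.Basis (Fin 4) ℝ M,
    ⁅b 0, b 1⁆ = b 1 ∧ ⁅b 0, b 2⁆ = 0 ∧ ⁅b 0, b 3⁆ = 0 ∧
    ⁅b 1, b 2⁆ = 0 ∧ ⁅b 1, b 3⁆ = 0 ∧ ⁅b 2, b 3⁆ = b 3

def IsAffC : Prop :=
  ∃ b : Module.Basis (Fin 4) ℝ M,
    ⁅b 0, b 1⁆ = 0 ∧ ⁅b 0, b 2⁆ = b 2 ∧ ⁅b 0, b 3⁆ = b 3 ∧
    ⁅b 1, b 2⁆ = b 3 ∧ ⁅b 1, b 3⁆ = -b 2 ∧ ⁅b 2, b 3⁆ = 0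

def IsR4m1m1 : Prop :=
  ∃ b : Module.Basis (Fin 4) ℝ M,
    ⁅b 3, b 0⁆ = b 0 ∧ ⁅b 3, b 1⁆ = -b 1 ∧ ⁅b 3, b 2⁆ = -b 2 ∧
    ⁅b 0, b 1⁆ = 0 ∧ ⁅b 0, b 2⁆ = 0 ∧ ⁅b 1, b 2⁆ = 0

def IsR4'0 (δ : ℝ) : Prop :=
  ∃ b : Module.Basis (Fin 4) ℝ M,
    ⁅b 3, b 0⁆ = b 0 ∧ ⁅b 3, b 1⁆ = -(δ • b 2) ∧ ⁅b 3, b 2⁆ = δ • b 1 ∧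
    ⁅b 0, b 1⁆ = 0 ∧ ⁅b 0, b 2⁆ = 0 ∧ ⁅b 1, b 2⁆ = 0

def IsD4 (lam : ℝ) : Prop :=
  ∃ b : Module.Basis (Fin 4) ℝ M,
    ⁅b 0, b 1⁆ = b 2 ∧ ⁅b 3, b 0⁆ = lam • b 0 ∧ ⁅b 3, b 1⁆ = (1 - lam) • b 1 ∧
    ⁅b 3, b 2⁆ = b 2 ∧ ⁅b 0, b 2⁆ = 0 ∧ ⁅b 1, b 2⁆ = 0

def IsD4' (δ : ℝ) : Prop :=
  ∃ b : Module.Basis (Fin 4) ℝ M,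
    ⁅b 0, b 1⁆ = b 2 ∧ ⁅b 3, b 0⁆ = (δ / 2) • b 0 - b 1 ∧
    ⁅b 3, b 1⁆ = b 0 + (δ / 2) • b 1 ∧ ⁅b 3, b 2⁆ = δ • b 2 ∧
    ⁅b 0, b 2⁆ = 0 ∧ ⁅b 1, b 2⁆ = 0

end Models

/-!
Write `g(x, y) = ω(J x, y)`. A lagrangian ideal `h` is abelian: for `a, b ∈ h` the cocycle identity
writes `ω([a, b], c)` as `ω`-pairings of `[h, L] ⊆ h` with `h`, which vanish, and `ω` is
nondegenerate. By the Nijenhuis identity `J [J a, J b] = -[J a, b] - [a, J b]` then lies in `h`.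
Since `h` is lagrangian, membership in `J h` (resp. `h`) is tested by `ω (J ·) z` (resp.
`ω (J ·) (J z)`) for `z ∈ h`, and the Koszul formula expresses these pairings through terms
`g([u, v], w)`, each of which is now an `ω`-pairing of two elements of `h`.
-/

section LagrangianIdeal

variable {L : Type*} [LieRing L] [LieAlgebra ℝ L] {J : Module.End ℝ L}
  {ω : L →ₗ[ℝ] L →ₗ[ℝ] ℝ} {D : L →ₗ[ℝ] L →ₗ[ℝ] L} {h : Submodule ℝ L}

theorem lie_mem_of_left_mem (hideal : ∀ x : L, ∀ y ∈ h, ⁅x, y⁆ ∈ h) {y : L} (hy : y ∈ h)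
    (x : L) : ⁅y, x⁆ ∈ h := by
  rw [← lie_skew]
  exact h.neg_mem (hideal x y hy)

theorem IsComplexStructure.map_lie_map_map (hJ : IsComplexStructure J) (p q : L) :
    J ⁅J p, J q⁆ = J ⁅p, q⁆ - ⁅J p, q⁆ - ⁅p, J q⁆ := by
  have hN := hJ.2 p q
  rw [sub_sub, sub_sub, sub_eq_zero] at hN
  rw [hN, map_add, map_add, hJ.1, hJ.1]
  abel

theorem IsSymplecticForm.lie_eq_zero_of_isotropic_ideal (hω : IsSymplecticForm ω)
    (hideal : ∀ x : L, ∀ y ∈ h, ⁅x, y⁆ ∈ h) (hiso : ∀ x ∈ h, ∀ y ∈ h, ω x y = 0)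
    {a b : L} (ha : a ∈ h) (hb : b ∈ h) : ⁅a, b⁆ = 0 := by
  refine hω.2.1 _ fun c => ?_
  have hcocycle := hω.2.2 a b c
  rw [hiso _ (lie_mem_of_left_mem hideal hb c) a ha, hiso _ (hideal c a ha) b hb] at hcocycle
  linarith

namespace IsKahlerStructure

theorem map_lie_map_map_mem (hK : IsKahlerStructure J ω)
    (hideal : ∀ x : L, ∀ y ∈ h, ⁅x, y⁆ ∈ h) (hiso : ∀ x ∈ h, ∀ y ∈ h, ω x y = 0)
    {a b : L} (ha : a ∈ h) (hb : b ∈ h) : J ⁅J a, J b⁆ ∈ h := by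
  rw [hK.1.map_lie_map_map, hK.2.1.lie_eq_zero_of_isotropic_ideal hideal hiso ha hb, map_zero,
    zero_sub]
  exact h.sub_mem (h.neg_mem (hideal _ b hb)) (lie_mem_of_left_mem hideal ha _)

theorem apply_map_map_eq_zero (hK : IsKahlerStructure J ω)
    (hiso : ∀ x ∈ h, ∀ y ∈ h, ω x y = 0) {a b : L} (ha : a ∈ h) (hb : b ∈ h) :
    ω (J a) (J b) = 0 :=
  (hK.2.2 a b).trans (hiso a ha b hb)

theorem mem_map_of_forall_apply_eq_zero (hK : IsKahlerStructure J ω)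
    (hlag : ∀ y : L, (∀ x ∈ h, ω x y = 0) → y ∈ h) {w : L}
    (hw : ∀ z ∈ h, ω (J w) z = 0) : w ∈ h.map J := by
  have hJw : J w ∈ h :=
    hlag _ fun z hz => (LinearMap.IsAlt.eq_iff (B := ω) hK.2.1.1).mp (hw z hz)
  exact ⟨-J w, h.neg_mem hJw, by rw [map_neg, hK.1.1, neg_neg]⟩

theorem mem_of_forall_apply_map_eq_zero (hK : IsKahlerStructure J ω)
    (hlag : ∀ y : L, (∀ x ∈ h, ω x y = 0) → y ∈ h) {w : L}
    (hw : ∀ z ∈ h, ω (J w) (J z) = 0) : w ∈ h :=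
  hlag w fun z hz =>
    (LinearMap.IsAlt.eq_iff (B := ω) hK.2.1.1).mp ((hK.2.2 w z).symm.trans (hw z hz))

end IsKahlerStructure

structure IsLagrangianIdeal (ω : L →ₗ[ℝ] L →ₗ[ℝ] ℝ) (h : Submodule ℝ L) : Prop where
  lie_mem : ∀ x : L, ∀ y ∈ h, ⁅x, y⁆ ∈ h
  isotropic : ∀ x ∈ h, ∀ y ∈ h, ω x y = 0
  mem_of_forall : ∀ y : L, (∀ x ∈ h, ω x y = 0) → y ∈ h

namespace IsLeviCivita

theorem apply_mem_map (hD : IsLeviCivita J ω D) (hK : IsKahlerStructure J ω)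
    (hh : IsLagrangianIdeal ω h) {x y : L} (hx : x ∈ h) (hy : y ∈ h) : D x y ∈ h.map J := by
  have hab : ∀ a ∈ h, ∀ b ∈ h, ⁅a, b⁆ = 0 := fun a ha b hb =>
    hK.2.1.lie_eq_zero_of_isotropic_ideal hh.lie_mem hh.isotropic ha hb
  refine hK.mem_map_of_forall_apply_eq_zero hh.mem_of_forall fun z hz => ?_
  have hkoszul := hD x y z
  rw [hab x hx y hy, hab y hy z hz, hab z hz x hx] at hkoszul
  simpa using hkoszul

theorem apply_map_map_mem_map (hD : IsLeviCivita J ω D) (hK : IsKahlerStructure J ω)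
    (hh : IsLagrangianIdeal ω h) {x y : L} (hx : x ∈ h) (hy : y ∈ h) :
    D (J x) (J y) ∈ h.map J := by
  obtain ⟨hideal, hiso, hlag⟩ := hh
  refine hK.mem_map_of_forall_apply_eq_zero hlag fun z hz => ?_
  have hkoszul := hD (J x) (J y) z
  rw [hiso _ (hK.map_lie_map_map_mem hideal hiso hx hy) z hz,
    hK.apply_map_map_eq_zero hiso (hideal _ z hz) hx,
    hK.apply_map_map_eq_zero hiso (lie_mem_of_left_mem hideal hz _) hy] at hkoszul
  linarith

theorem apply_map_mem (hD : IsLeviCivita J ω D) (hK : IsKahlerStructure J ω)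
    (hh : IsLagrangianIdeal ω h) {x y : L} (hx : x ∈ h) (hy : y ∈ h) : D x (J y) ∈ h := by
  obtain ⟨hideal, hiso, hlag⟩ := hh
  refine hK.mem_of_forall_apply_map_eq_zero hlag fun z hz => ?_
  have hkoszul := hD x (J y) (J z)
  rw [hK.apply_map_map_eq_zero hiso (lie_mem_of_left_mem hideal hx _) hz,
    hiso _ (hK.map_lie_map_map_mem hideal hiso hy hz) x hx,
    hK.apply_map_map_eq_zero hiso (hideal _ x hx) hy] at hkoszul
  linarith

theorem map_apply_mem (hD : IsLeviCivita J ω D) (hK : IsKahlerStructure J ω)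
    (hh : IsLagrangianIdeal ω h) {x y : L} (hx : x ∈ h) (hy : y ∈ h) : D (J x) y ∈ h := by
  obtain ⟨hideal, hiso, hlag⟩ := hh
  refine hK.mem_of_forall_apply_map_eq_zero hlag fun z hz => ?_
  have hkoszul := hD (J x) y (J z)
  rw [hK.apply_map_map_eq_zero hiso (hideal _ y hy) hz,
    hK.apply_map_map_eq_zero hiso (lie_mem_of_left_mem hideal hy _) hx,
    hiso _ (hK.map_lie_map_map_mem hideal hiso hz hx) y hy] at hkoszul
  linarith

end IsLeviCivita

end LagrangianIdeal

theorem lagrangian_ideal_totally_geodesic_general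
    {L : Type*} [LieRing L] [LieAlgebra ℝ L]
    (J : Module.End ℝ L) (ω : L →ₗ[ℝ] L →ₗ[ℝ] ℝ)
    (hK : IsKahlerStructure J ω)
    (D : L →ₗ[ℝ] L →ₗ[ℝ] L) (hD : IsLeviCivita J ω D)
    (h : Submodule ℝ L) (hideal : ∀ x : L, ∀ y ∈ h, ⁅x, y⁆ ∈ h)
    (hiso : ∀ x ∈ h, ∀ y ∈ h, ω x y = 0)
    (hlag : ∀ y : L, (∀ x ∈ h, ω x y = 0) → y ∈ h) :
    (∀ x ∈ h, ∀ y ∈ h,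
      D x y ∈ Submodule.map J h ∧ D (J x) (J y) ∈ Submodule.map J h ∧
      D x (J y) ∈ h ∧ D (J x) y ∈ h) ∧
    (∀ u ∈ Submodule.map J h, ∀ v ∈ Submodule.map J h, D u v ∈ Submodule.map J h) := by
  have hh : IsLagrangianIdeal ω h := ⟨hideal, hiso, hlag⟩
  refine ⟨fun x hx y hy => ⟨hD.apply_mem_map hK hh hx hy, hD.apply_map_map_mem_map hK hh hx hy,
    hD.apply_map_mem hK hh hx hy, hD.map_apply_mem hK hh hx hy⟩, ?_⟩
  rintro _ ⟨x, hx, rfl⟩ _ ⟨y, hy, rfl⟩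
  exact hD.apply_map_map_mem_map hK hh hx hy

/-- For a Kähler Lie algebra with ω-lagrangian ideal h satisfying h ∩ J(h) = 0,
the Levi-Civita connection maps h×h to J(h), J(h)×J(h) to J(h), h×J(h) and J(h)×h to h;
in particular J(h) is totally geodesic. -/
theorem lagrangian_ideal_totally_geodesic
    {L : Type*} [LieRing L] [LieAlgebra ℝ L] [Module.Finite ℝ L]
    (J : Module.End ℝ L) (ω : L →ₗ[ℝ] L →ₗ[ℝ] ℝ)
    (hK : IsKahlerStructure J ω)
    (D : L →ₗ[ℝ] L →ₗ[ℝ] L) (hD : IsLeviCivita J ω D)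
    (h : Submodule ℝ L) (hideal : ∀ x : L, ∀ y ∈ h, ⁅x, y⁆ ∈ h)
    (hiso : ∀ x ∈ h, ∀ y ∈ h, ω x y = 0)
    (hlag : ∀ y : L, (∀ x ∈ h, ω x y = 0) → y ∈ h)
    (hint : h ⊓ Submodule.map J h = ⊥) :
    (∀ x ∈ h, ∀ y ∈ h,
      D x y ∈ Submodule.map J h ∧ D (J x) (J y) ∈ Submodule.map J h ∧
      D x (J y) ∈ h ∧ D (J x) y ∈ h) ∧
    (∀ u ∈ Submodule.map J h, ∀ v ∈ Submodule.map J h, D u v ∈ Submodule.map J h) :=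
  lagrangian_ideal_totally_geodesic_general J ω hK D hD h hideal hiso hlag
end

section
/- Let A be a finite-dimensional commutative associative complex algebra equipped with a nondegenerate symmetric ℂ-bilinear form B satisfying B(ab,c) = B(a,bc) for all a,b,c ∈ A, and let aff(A) be the underlying real Lie algebra of A ⊕ A with bracket [(a,b),(c,d)] = (0, ad − cb). Define J(a,b) = (−ia, ib), g((a,b),(c,d)) = Re(B(a,d) + B(b,c)), and ∇_{(a,b)}(c,d) = (−ac, ad). Then: g is a nondegenerate symmetric real bilinear form on aff(A) for which the subspaces A ⊕ 0 and 0 ⊕ A are null (so g has neutral signature); ∇ is torsion-free (∇_x y − ∇_y x = [x,y]) and is the Levi-Civita connection of g; J is a complex structure compatible with g (g(Jx,Jy) = g(x,y)) and is parallel (∇_x(Jy) = J(∇_x y) for all x,y); and the curvature R(x,y) = ∇_x∇_y − ∇_y∇_x − ∇_{[x,y]} vanishes identically, so g is a flat (in particular Ricci-flat) pseudo-Kähler metric on aff(A). -/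
set_option linter.unusedSectionVars false
set_option linter.unnecessarySeqFocus false

/-- The underlying set of the affine Lie algebra aff(A) = A ⊕ A. -/
def AffLie (A : Type*) : Type _ := A × A

namespace AffLie

variable {A : Type*} [CommRing A] [Algebra ℝ A]

instance : AddCommGroup (AffLie A) := inferInstanceAs (AddCommGroup (A × A))
instance : Module ℝ (AffLie A) := inferInstanceAs (Module ℝ (A × A))

/-- Build an element of aff(A) from its two components. -/
def mk' (a b : A) : AffLie A := ((a, b) : A × A)

/-- First component. -/
def fst (p : AffLie A) : A := Prod.fst p

/-- Second component. -/
def snd (p : AffLie A) : A := Prod.snd p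

@[simp] lemma fst_mk (a b : A) : (mk' a b : AffLie A).fst = a := rfl
@[simp] lemma snd_mk (a b : A) : (mk' a b : AffLie A).snd = b := rfl
@[simp] lemma fst_add (p q : AffLie A) : (p + q).fst = p.fst + q.fst := rfl
@[simp] lemma snd_add (p q : AffLie A) : (p + q).snd = p.snd + q.snd := rfl
@[simp] lemma fst_smul (t : ℝ) (p : AffLie A) : (t • p).fst = t • p.fst := rfl
@[simp] lemma snd_smul (t : ℝ) (p : AffLie A) : (t • p).snd = t • p.snd := rfl

@[simp] lemma fst_zero : (0 : AffLie A).fst = 0 := rfl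
@[simp] lemma snd_zero : (0 : AffLie A).snd = 0 := rfl

lemma ext' {p q : AffLie A} (h1 : p.fst = q.fst) (h2 : p.snd = q.snd) : p = q :=
  Prod.ext h1 h2

/-- The Lie ring structure on aff(A): [(a,b),(c,d)] = (0, a d - c b). -/
instance : LieRing (AffLie A) where
  bracket p q := mk' 0 (p.fst * q.snd - q.fst * p.snd)
  add_lie p q r := by
    apply ext' <;> simp <;> ring
  lie_add p q r := by
    apply ext' <;> simp <;> ring
  lie_self p := by
    apply ext' <;> simp
  leibniz_lie p q r := by
    apply ext' <;> simp <;> ring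

@[simp] lemma fst_bracket (p q : AffLie A) : (⁅p, q⁆ : AffLie A).fst = 0 := rfl
@[simp] lemma snd_bracket (p q : AffLie A) :
    (⁅p, q⁆ : AffLie A).snd = p.fst * q.snd - q.fst * p.snd := rfl

instance : LieAlgebra ℝ (AffLie A) where
  lie_smul t p q := by
    apply ext' <;> simp [mul_smul_comm, smul_mul_assoc, smul_sub]

end AffLie

section ComplexAff

variable {A : Type*} [CommRing A] [Algebra ℂ A] [Algebra ℝ A] [IsScalarTower ℝ ℂ A]

/-- The flat connection ∇_{(a,b)}(c,d) = (-ac, ad) on aff(A). -/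
def affConn (p q : AffLie A) : AffLie A :=
  AffLie.mk' (-(p.fst * q.fst)) (p.fst * q.snd)

/-- The complex structure J(a,b) = (-ia, ib) on aff(A), A a complex algebra. -/
def affJ (p : AffLie A) : AffLie A :=
  AffLie.mk' (-(Complex.I • p.fst)) (Complex.I • p.snd)

/-- The neutral metric g((a,b),(c,d)) = Re (B(a,d) + B(b,c)) on aff(A). -/
noncomputable def affMetric (B : A →ₗ[ℂ] A →ₗ[ℂ] ℂ) (p q : AffLie A) : ℝ :=
  (B p.fst q.snd + B p.snd q.fst).re

end ComplexAff

/-! Associativity gives `B x y = φ (x * y)` with `φ = B 1`, so `g((a,b),(c,d)) = Re φ(ad + bc)`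
and the metric identities become polynomial identities in the commutative ring `A`.
`∇_(a,b)` multiplies the two components by `-a` and `a`; these multiplications commute with
one another and with `J`, which gives flatness and parallelism of `J`. -/

namespace AffLie

variable {A : Type*} [CommRing A]

@[simp] lemma fst_sub (p q : AffLie A) : (p - q).fst = p.fst - q.fst := rfl
@[simp] lemma snd_sub (p q : AffLie A) : (p - q).snd = p.snd - q.snd := rfl
@[simp] lemma fst_neg (p : AffLie A) : (-p).fst = -p.fst := rfl
@[simp] lemma snd_neg (p : AffLie A) : (-p).snd = -p.snd := rfl

end AffLie

section Connection

variable {A : Type*} [CommRing A]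

@[simp] lemma affConn_fst (p q : AffLie A) : (affConn p q).fst = -(p.fst * q.fst) := rfl
@[simp] lemma affConn_snd (p q : AffLie A) : (affConn p q).snd = p.fst * q.snd := rfl

variable [Algebra ℝ A]

theorem affConn_sub_affConn (p q : AffLie A) : affConn p q - affConn q p = ⁅p, q⁆ := by
  apply AffLie.ext' <;> simp <;> ring

theorem affConn_curvature_eq_zero (p q r : AffLie A) :
    affConn p (affConn q r) - affConn q (affConn p r) - affConn ⁅p, q⁆ r = 0 := by
  apply AffLie.ext' <;> simp <;> ring

theorem trace_affConn_curvature_eq_zero (p q : AffLie A) (T : Module.End ℝ (AffLie A))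
    (hT : ∀ r, T r = affConn p (affConn r q) - affConn r (affConn p q) - affConn ⁅p, r⁆ q) :
    LinearMap.trace ℝ (AffLie A) T = 0 := by
  have hT0 : T = 0 := LinearMap.ext fun r => (hT r).trans (affConn_curvature_eq_zero p r q)
  rw [hT0, map_zero]

end Connection

section ComplexStructure

variable {A : Type*} [CommRing A] [Algebra ℂ A]

@[simp] lemma affJ_fst (p : AffLie A) : (affJ p).fst = -(Complex.I • p.fst) := rfl
@[simp] lemma affJ_snd (p : AffLie A) : (affJ p).snd = Complex.I • p.snd := rfl

theorem affJ_affJ (p : AffLie A) : affJ (affJ p) = -p := by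
  apply AffLie.ext' <;> simp [smul_smul]

theorem affConn_affJ (p q : AffLie A) : affConn p (affJ q) = affJ (affConn p q) := by
  apply AffLie.ext' <;> simp

variable [Algebra ℝ A]

theorem affJ_nijenhuis (p q : AffLie A) :
    ⁅affJ p, affJ q⁆ - ⁅p, q⁆ - affJ ⁅affJ p, q⁆ - affJ ⁅p, affJ q⁆ = 0 := by
  apply AffLie.ext' <;> simp [smul_sub, smul_smul] <;> abel

variable [IsScalarTower ℝ ℂ A]

def affJLinear : Module.End ℝ (AffLie A) where
  toFun := affJ
  map_add' p q := by apply AffLie.ext' <;> simp [smul_add] <;> abel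
  map_smul' t p := by apply AffLie.ext' <;> simp [Algebra.smul_def, mul_left_comm]

@[simp] lemma affJLinear_apply (p : AffLie A) : affJLinear p = affJ p := rfl

end ComplexStructure

theorem LinearMap.eq_zero_of_forall_re_eq_zero {M : Type*} [AddCommGroup M] [Module ℂ M]
    (f : M →ₗ[ℂ] ℂ) (h : ∀ x, (f x).re = 0) : f = 0 := by
  ext x
  refine Complex.ext (h x) ?_
  simpa using h (Complex.I • x)

section Metric

variable {A : Type*} [CommRing A] [Algebra ℂ A] (B : A →ₗ[ℂ] A →ₗ[ℂ] ℂ)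

theorem affMetric_affJ (p q : AffLie A) : affMetric B (affJ p) (affJ q) = affMetric B p q := by
  simp [affMetric]

theorem affMetric_mk_zero (a b : A) : affMetric B (AffLie.mk' a 0) (AffLie.mk' b 0) = 0 := by
  simp [affMetric]

theorem affMetric_zero_mk (a b : A) : affMetric B (AffLie.mk' 0 a) (AffLie.mk' 0 b) = 0 := by
  simp [affMetric]

theorem affMetric_nondegenerate (hB : ∀ a : A, (∀ b : A, B a b = 0) → a = 0) (p : AffLie A)
    (hp : ∀ q, affMetric B p q = 0) : p = 0 := by
  have hre : ∀ a, (∀ b, (B a b).re = 0) → a = 0 := fun a ha =>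
    hB a (LinearMap.congr_fun ((B a).eq_zero_of_forall_re_eq_zero ha))
  exact AffLie.ext' (hre _ fun b => by simpa [affMetric] using hp (.mk' 0 b))
    (hre _ fun b => by simpa [affMetric] using hp (.mk' b 0))

noncomputable def affMetricBilin [Algebra ℝ A] [IsScalarTower ℝ ℂ A] :
    AffLie A →ₗ[ℝ] AffLie A →ₗ[ℝ] ℝ :=
  LinearMap.mk₂ ℝ (affMetric B)
    (fun p p' q => by simp [affMetric]; ring)
    (fun t p q => by simp [affMetric, LinearMap.map_smul_of_tower]; ring)
    (fun p q q' => by simp [affMetric]; ring)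
    (fun t p q => by simp [affMetric, LinearMap.map_smul_of_tower]; ring)

@[simp] lemma affMetricBilin_apply [Algebra ℝ A] [IsScalarTower ℝ ℂ A] (p q : AffLie A) :
    affMetricBilin B p q = affMetric B p q :=
  rfl

variable {B}

theorem apply_eq_apply_one_mul (hB : ∀ a b c : A, B (a * b) c = B a (b * c)) (a b : A) :
    B a b = B 1 (a * b) := by
  rw [← hB, one_mul]

theorem affMetric_eq_re (hB : ∀ a b c : A, B (a * b) c = B a (b * c)) (p q : AffLie A) :
    affMetric B p q = (B 1 (p.fst * q.snd + p.snd * q.fst)).re := by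
  rw [affMetric, apply_eq_apply_one_mul hB p.fst, apply_eq_apply_one_mul hB p.snd, ← map_add]

theorem affMetric_comm (hB : ∀ a b c : A, B (a * b) c = B a (b * c)) (p q : AffLie A) :
    affMetric B p q = affMetric B q p := by
  rw [affMetric_eq_re hB, affMetric_eq_re hB, mul_comm p.fst, mul_comm p.snd, add_comm]

theorem affMetric_koszul [Algebra ℝ A] (hB : ∀ a b c : A, B (a * b) c = B a (b * c))
    (p q r : AffLie A) :
    2 * affMetric B (affConn p q) r =
      affMetric B ⁅p, q⁆ r - affMetric B ⁅q, r⁆ p + affMetric B ⁅r, p⁆ q := by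
  simp only [affMetric_eq_re hB, affConn_fst, affConn_snd, AffLie.fst_bracket,
    AffLie.snd_bracket, zero_mul, mul_add, sub_mul, neg_mul, mul_neg, map_add,
    map_sub, map_neg, map_zero, Complex.add_re, Complex.sub_re, Complex.neg_re, Complex.zero_re]
  ring_nf

end Metric

theorem affLie_complex_ricci_flat_kahler_general
    {A : Type*} [CommRing A] [Algebra ℂ A] [Algebra ℝ A] [IsScalarTower ℝ ℂ A]
    (B : A →ₗ[ℂ] A →ₗ[ℂ] ℂ)
    (hBnd : ∀ a : A, (∀ b : A, B a b = 0) → a = 0)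
    (hBassoc : ∀ a b c : A, B (a * b) c = B a (b * c)) :
    -- g is a symmetric bilinear form
    (∃ gl : AffLie A →ₗ[ℝ] AffLie A →ₗ[ℝ] ℝ, ∀ p q : AffLie A, gl p q = affMetric B p q) ∧
    (∀ p q : AffLie A, affMetric B p q = affMetric B q p) ∧
    -- g is nondegenerate
    (∀ p : AffLie A, (∀ q : AffLie A, affMetric B p q = 0) → p = 0) ∧
    -- A ⊕ 0 and 0 ⊕ A are null subspaces for g
    (∀ a b : A, affMetric B (AffLie.mk' a 0) (AffLie.mk' b 0) = 0) ∧
    (∀ a b : A, affMetric B (AffLie.mk' 0 a) (AffLie.mk' 0 b) = 0) ∧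
    -- ∇ is torsion-free
    (∀ p q : AffLie A, affConn p q - affConn q p = ⁅p, q⁆) ∧
    -- ∇ is the Levi-Civita connection of g (Koszul formula)
    (∀ p q r : AffLie A,
      2 * affMetric B (affConn p q) r =
        affMetric B ⁅p, q⁆ r - affMetric B ⁅q, r⁆ p + affMetric B ⁅r, p⁆ q) ∧
    -- J is a complex structure, compatible with g and parallel for ∇
    (∃ J : Module.End ℝ (AffLie A),
      (∀ p : AffLie A, J p = affJ p) ∧
      (∀ p : AffLie A, J (J p) = -p) ∧
      (∀ p q : AffLie A, ⁅J p, J q⁆ - ⁅p, q⁆ - J ⁅J p, q⁆ - J ⁅p, J q⁆ = 0) ∧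
      (∀ p q : AffLie A, affMetric B (J p) (J q) = affMetric B p q) ∧
      (∀ p q : AffLie A, affConn p (J q) = J (affConn p q))) ∧
    -- the curvature of ∇ vanishes identically: g is flat
    (∀ p q r : AffLie A,
      affConn p (affConn q r) - affConn q (affConn p r) - affConn ⁅p, q⁆ r = 0) ∧
    -- in particular g is Ricci flat
    (∀ p q : AffLie A, ∀ T : Module.End ℝ (AffLie A),
      (∀ r : AffLie A,
        T r = affConn p (affConn r q) - affConn r (affConn p q) - affConn ⁅p, r⁆ q) →
      LinearMap.trace ℝ (AffLie A) T = 0) := by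
  refine ⟨⟨affMetricBilin B, affMetricBilin_apply B⟩, affMetric_comm hBassoc,
    affMetric_nondegenerate B hBnd, affMetric_mk_zero B, affMetric_zero_mk B,
    affConn_sub_affConn, affMetric_koszul hBassoc, ⟨affJLinear, affJLinear_apply, ?_⟩,
    affConn_curvature_eq_zero, trace_affConn_curvature_eq_zero⟩
  simp only [affJLinear_apply]
  exact ⟨affJ_affJ, affJ_nijenhuis, affMetric_affJ B, affConn_affJ⟩

/-- For a finite-dimensional commutative associative complex algebra A with a
nondegenerate symmetric associative ℂ-bilinear form B, the metric
g((a,b),(c,d)) = Re(B(a,d) + B(b,c)) on the real Lie algebra aff(A) is a nondegenerate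
symmetric bilinear form which is null on A ⊕ 0 and 0 ⊕ A (hence of neutral signature),
∇_{(a,b)}(c,d) = (-ac, ad) is torsion-free and is the Levi-Civita connection of g (Koszul
formula), J(a,b) = (-ia, ib) is a complex structure compatible with g and parallel for ∇,
and the curvature of ∇ vanishes: g is a flat, in particular Ricci-flat, pseudo-Kähler
metric on aff(A). -/
theorem affLie_complex_ricci_flat_kahler
    {A : Type*} [CommRing A] [Algebra ℂ A] [Algebra ℝ A] [IsScalarTower ℝ ℂ A]
    [Module.Finite ℂ A]
    (B : A →ₗ[ℂ] A →ₗ[ℂ] ℂ)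
    (hBsymm : ∀ a b : A, B a b = B b a)
    (hBnd : ∀ a : A, (∀ b : A, B a b = 0) → a = 0)
    (hBassoc : ∀ a b c : A, B (a * b) c = B a (b * c)) :
    -- g is a symmetric bilinear form
    (∃ gl : AffLie A →ₗ[ℝ] AffLie A →ₗ[ℝ] ℝ, ∀ p q : AffLie A, gl p q = affMetric B p q) ∧
    (∀ p q : AffLie A, affMetric B p q = affMetric B q p) ∧
    -- g is nondegenerate
    (∀ p : AffLie A, (∀ q : AffLie A, affMetric B p q = 0) → p = 0) ∧
    -- A ⊕ 0 and 0 ⊕ A are null subspaces for g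
    (∀ a b : A, affMetric B (AffLie.mk' a 0) (AffLie.mk' b 0) = 0) ∧
    (∀ a b : A, affMetric B (AffLie.mk' 0 a) (AffLie.mk' 0 b) = 0) ∧
    -- ∇ is torsion-free
    (∀ p q : AffLie A, affConn p q - affConn q p = ⁅p, q⁆) ∧
    -- ∇ is the Levi-Civita connection of g (Koszul formula)
    (∀ p q r : AffLie A,
      2 * affMetric B (affConn p q) r =
        affMetric B ⁅p, q⁆ r - affMetric B ⁅q, r⁆ p + affMetric B ⁅r, p⁆ q) ∧
    -- J is a complex structure, compatible with g and parallel for ∇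
    (∃ J : Module.End ℝ (AffLie A),
      (∀ p : AffLie A, J p = affJ p) ∧
      (∀ p : AffLie A, J (J p) = -p) ∧
      (∀ p q : AffLie A, ⁅J p, J q⁆ - ⁅p, q⁆ - J ⁅J p, q⁆ - J ⁅p, J q⁆ = 0) ∧
      (∀ p q : AffLie A, affMetric B (J p) (J q) = affMetric B p q) ∧
      (∀ p q : AffLie A, affConn p (J q) = J (affConn p q))) ∧
    -- the curvature of ∇ vanishes identically: g is flat
    (∀ p q r : AffLie A,
      affConn p (affConn q r) - affConn q (affConn p r) - affConn ⁅p, q⁆ r = 0) ∧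
    -- in particular g is Ricci flat
    (∀ p q : AffLie A, ∀ T : Module.End ℝ (AffLie A),
      (∀ r : AffLie A,
        T r = affConn p (affConn r q) - affConn r (affConn p q) - affConn ⁅p, r⁆ q) →
      LinearMap.trace ℝ (AffLie A) T = 0) :=
  affLie_complex_ricci_flat_kahler_general B hBnd hBassoc
end
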